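/- arXiv:2405.03079 — 2 statements merged into one kernel-verified Lean document; each statement's English description precedes it below -/
import Mathlib

section
/- The sum of the areas under all Dyck paths from (0,0) to (2n,0) equals -(2n+1)·C(n) + 4^n, where C(n) = (2n)!/(n!(n+1)!) is the n-th Catalan number. -/
/-!
For each height `h`, consider the walks of length `m` that stay weakly above the axis and end at
`h`: their number, and the total of their heights `y_0 + ⋯ + y_m`. For `h ≥ 0`, removing the last
step splits these walks into those of length `m - 1` ending at `h - 1` and at `h + 1`. Writing
`m = h + 2d` and `T_m(k) = ∑_{i<k} C(m, i)`, both quantities have closed forms linear in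
`T_m(d-1), T_m(d), T_m(d+1)`, which are checked along the recursion using only Pascal's rule
`T_{m+1}(k) = T_m(k) + T_m(k-1)`. For Dyck paths (`m = 2n`, `h = 0`) the height total is
`T_{2n}(n) + T_{2n}(n-1) = T_{2n+1}(n) = 4^n - C(2n+1, n)`, and `C(2n+1, n) = (2n+1) C(n)`.
-/

open Finset

/-- Step of a Dyck path: `true` is an up-step (+1), `false` a down-step (-1). -/
def dstep (b : Bool) : ℤ := if b then 1 else -1

/-- Height of the path after the first `k` steps. -/
def dheight {m : ℕ} (f : Fin m → Bool) (k : ℕ) : ℤ :=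
  ∑ i ∈ Finset.univ.filter (fun i : Fin m => (i : ℕ) < k), dstep (f i)

/-- A Dyck path: ends at height 0 and never goes below the x-axis. -/
def IsDyck {m : ℕ} (f : Fin m → Bool) : Prop :=
  dheight f m = 0 ∧ ∀ k ∈ Finset.range m, 0 ≤ dheight f k

instance {m : ℕ} : DecidablePred (@IsDyck m) := fun f => by
  unfold IsDyck; infer_instance

/-- Area under the path: sum of the heights (trapezoid areas telescope to this). -/
def darea {m : ℕ} (f : Fin m → Bool) : ℤ := ∑ k ∈ Finset.range m, dheight f k

/-- Sum of the `r`-th powers of the areas under all Dyck paths from (0,0) to (2n,0). -/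
def dyckPowerSum (n r : ℕ) : ℚ :=
  ∑ f ∈ Finset.univ.filter (fun f : Fin (2*n) → Bool => IsDyck f), (darea f : ℚ) ^ r

/-- The Catalan number `(2n)!/(n!(n+1)!)`. -/
def cat (n : ℕ) : ℚ :=
  (Nat.factorial (2*n) : ℚ) / ((Nat.factorial n : ℚ) * (Nat.factorial (n+1) : ℚ))


section Walks

variable {m : ℕ}

lemma dheight_zero (f : Fin m → Bool) : dheight f 0 = 0 := by
  simp [dheight]

lemma dheight_of_le {k : ℕ} (f : Fin m → Bool) (hk : m ≤ k) : dheight f k = dheight f m := by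
  simp only [dheight]
  rw [filter_true_of_mem fun i _ => by omega, filter_true_of_mem fun i _ => i.is_lt]

lemma dheight_snoc (g : Fin m → Bool) (b : Bool) (k : ℕ) :
    dheight (Fin.snoc g b : Fin (m + 1) → Bool) k = dheight g k + if m < k then dstep b else 0 := by
  simp only [dheight, sum_filter, Fin.sum_univ_castSucc, Fin.snoc_castSucc, Fin.snoc_last,
    Fin.val_castSucc, Fin.val_last]

lemma dheight_snoc_of_le {k : ℕ} (g : Fin m → Bool) (b : Bool) (hk : k ≤ m) :
    dheight (Fin.snoc g b : Fin (m + 1) → Bool) k = dheight g k := by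
  rw [dheight_snoc, if_neg (by omega), add_zero]

lemma dheight_snoc_last (g : Fin m → Bool) (b : Bool) :
    dheight (Fin.snoc g b : Fin (m + 1) → Bool) (m + 1) = dheight g m + dstep b := by
  rw [dheight_snoc, if_pos m.lt_succ_self, dheight_of_le g m.le_succ]

/-- Unlike `darea`, this includes the final height, which gives the closed form
`two_mul_sum_heightSum_nonnegWalks` its factor `h + 1`. -/
def heightSum (f : Fin m → Bool) : ℤ := ∑ k ∈ range (m + 1), dheight f k

lemma heightSum_eq_darea_add (f : Fin m → Bool) : heightSum f = darea f + dheight f m :=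
  sum_range_succ _ _

lemma heightSum_snoc (g : Fin m → Bool) (b : Bool) :
    heightSum (Fin.snoc g b : Fin (m + 1) → Bool) = heightSum g + (dheight g m + dstep b) := by
  rw [heightSum, sum_range_succ, dheight_snoc_last, heightSum]
  congr 1
  exact sum_congr rfl fun k hk => dheight_snoc_of_le g b (by simpa [Nat.lt_succ_iff] using hk)

def nonnegWalks (m : ℕ) (h : ℤ) : Finset (Fin m → Bool) :=
  univ.filter fun f => (∀ k ≤ m, 0 ≤ dheight f k) ∧ dheight f m = h

variable {h : ℤ}

lemma mem_nonnegWalks {f : Fin m → Bool} :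
    f ∈ nonnegWalks m h ↔ (∀ k ≤ m, 0 ≤ dheight f k) ∧ dheight f m = h := by
  simp [nonnegWalks]

lemma nonnegWalks_of_neg (hh : h < 0) : nonnegWalks m h = ∅ := by
  ext f
  simp only [mem_nonnegWalks, notMem_empty, iff_false, not_and]
  intro hf hfh
  linarith [hf m le_rfl]

lemma nonnegWalks_zero_of_ne (hh : h ≠ 0) : nonnegWalks 0 h = ∅ := by
  ext f
  simp only [mem_nonnegWalks, dheight_zero, notMem_empty, iff_false]
  omega

lemma snoc_mem_nonnegWalks_iff (hh : 0 ≤ h) (g : Fin m → Bool) (b : Bool) :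
    (Fin.snoc g b : Fin (m + 1) → Bool) ∈ nonnegWalks (m + 1) h ↔
      g ∈ nonnegWalks m (h - dstep b) := by
  simp only [mem_nonnegWalks, dheight_snoc_last]
  constructor
  · rintro ⟨hnonneg, hend⟩
    refine ⟨fun k hk => ?_, by omega⟩
    simpa only [dheight_snoc_of_le g b hk] using hnonneg k (by omega)
  · rintro ⟨hnonneg, hend⟩
    refine ⟨fun k hk => ?_, by omega⟩
    rcases hk.lt_or_eq with hk | rfl
    · rw [dheight_snoc_of_le g b (by omega)]
      exact hnonneg k (by omega)
    · rw [dheight_snoc_last]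
      omega

lemma sum_nonnegWalks_succ {M : Type*} [AddCommMonoid M] (hh : 0 ≤ h)
    (F : (Fin (m + 1) → Bool) → M) :
    ∑ f ∈ nonnegWalks (m + 1) h, F f =
      ∑ g ∈ nonnegWalks m (h - 1), F (Fin.snoc g true) +
        ∑ g ∈ nonnegWalks m (h + 1), F (Fin.snoc g false) := by
  calc ∑ f ∈ nonnegWalks (m + 1) h, F f
      = ∑ f, if f ∈ nonnegWalks (m + 1) h then F f else 0 := (Fintype.sum_ite_mem _ _).symm
    _ = ∑ p : Bool × (Fin m → Bool),
          if (Fin.snoc p.2 p.1 : Fin (m + 1) → Bool) ∈ nonnegWalks (m + 1) h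
          then F (Fin.snoc p.2 p.1) else 0 :=
        (Fintype.sum_equiv (Fin.snocEquiv fun _ => Bool) _ _ fun _ => rfl).symm
    _ = ∑ b, ∑ g ∈ nonnegWalks m (h - dstep b), F (Fin.snoc g b) := by
        simp only [Fintype.sum_prod_type, snoc_mem_nonnegWalks_iff hh, Fintype.sum_ite_mem]
    _ = _ := by simp [dstep, add_comm]

lemma card_nonnegWalks_succ (hh : 0 ≤ h) :
    #(nonnegWalks (m + 1) h) = #(nonnegWalks m (h - 1)) + #(nonnegWalks m (h + 1)) := by
  simpa only [card_eq_sum_ones] using sum_nonnegWalks_succ hh fun _ => 1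

lemma sum_heightSum_nonnegWalks_succ (hh : 0 ≤ h) :
    ∑ f ∈ nonnegWalks (m + 1) h, heightSum f =
      ∑ g ∈ nonnegWalks m (h - 1), heightSum g + ∑ g ∈ nonnegWalks m (h + 1), heightSum g +
        h * (#(nonnegWalks m (h - 1)) + #(nonnegWalks m (h + 1))) := by
  have hstep (h' : ℤ) (b : Bool) :
      ∑ g ∈ nonnegWalks m h', heightSum (Fin.snoc g b : Fin (m + 1) → Bool) =
        ∑ g ∈ nonnegWalks m h', heightSum g + #(nonnegWalks m h') * (h' + dstep b) := by
    simp only [heightSum_snoc]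
    rw [sum_add_distrib]
    congr 1
    rw [sum_congr rfl fun g hg => by rw [(mem_nonnegWalks.mp hg).2], sum_const, nsmul_eq_mul]
  rw [sum_nonnegWalks_succ hh, hstep, hstep]
  simp only [dstep]
  push_cast
  ring

end Walks

/-- Vanishes for `k ≤ 0`, so the closed forms below also cover walks ending above height `m`. -/
def chooseSumBelow (m : ℕ) (k : ℤ) : ℤ := ∑ i ∈ range k.toNat, (m.choose i : ℤ)

lemma chooseSumBelow_of_nonpos (m : ℕ) {k : ℤ} (hk : k ≤ 0) : chooseSumBelow m k = 0 := by
  simp [chooseSumBelow, Int.toNat_eq_zero.mpr hk]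

lemma chooseSumBelow_natCast_succ (m j : ℕ) :
    chooseSumBelow m (j + 1 : ℕ) = chooseSumBelow m j + m.choose j := by
  simp only [chooseSumBelow, Int.toNat_natCast, sum_range_succ]

lemma chooseSumBelow_succ (m : ℕ) (k : ℤ) :
    chooseSumBelow (m + 1) k = chooseSumBelow m k + chooseSumBelow m (k - 1) := by
  rcases le_or_gt k 0 with hk | hk
  · simp [chooseSumBelow_of_nonpos _ hk, chooseSumBelow_of_nonpos _ (show k - 1 ≤ 0 by omega)]
  obtain ⟨j, rfl⟩ : ∃ j : ℕ, k = j + 1 := ⟨(k - 1).toNat, by omega⟩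
  simp only [chooseSumBelow, add_sub_cancel_right, Int.toNat_natCast]
  rw [show ((j : ℤ) + 1).toNat = j + 1 by omega, sum_range_succ', sum_range_succ' _ j]
  simp only [Nat.choose_succ_succ', Nat.choose_zero_right, Nat.cast_add, sum_add_distrib]
  ring

lemma chooseSumBelow_central (e : ℕ) :
    chooseSumBelow (2 * e + 1) (e + 2) - 2 * chooseSumBelow (2 * e + 1) (e + 1) +
      chooseSumBelow (2 * e + 1) e = 0 := by
  have h₁ := chooseSumBelow_natCast_succ (2 * e + 1) (e + 1)
  have h₀ := chooseSumBelow_natCast_succ (2 * e + 1) e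
  push_cast at h₁ h₀
  rw [show (e : ℤ) + 1 + 1 = e + 2 by ring] at h₁
  rw [h₁, h₀, Nat.choose_symm_half]
  ring

lemma chooseSumBelow_halfway (n : ℕ) :
    chooseSumBelow (2 * n + 1) n = 4 ^ n - (2 * n + 1).choose n := by
  have h := chooseSumBelow_natCast_succ (2 * n + 1) n
  simp only [chooseSumBelow, Int.toNat_natCast] at h ⊢
  rw [← Nat.cast_sum, Nat.sum_range_choose_halfway] at h
  push_cast at h
  linarith

/-- The ballot numbers `m.choose d - m.choose (d - 1)`, written as a second difference of
partial row sums so that Pascal's rule for `chooseSumBelow` drives the induction. -/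
theorem card_nonnegWalks {m : ℕ} {h d : ℤ} (hmd : (m : ℤ) = h + 2 * d) (hh : -1 ≤ h) :
    (#(nonnegWalks m h) : ℤ) =
      chooseSumBelow m (d + 1) - 2 * chooseSumBelow m d + chooseSumBelow m (d - 1) := by
  induction m generalizing h d with
  | zero =>
    rcases (show d = 0 ∨ d ≤ -1 by omega) with rfl | hd
    · obtain rfl : h = 0 := by omega
      simp [nonnegWalks, dheight_zero, chooseSumBelow]
    · simp [nonnegWalks_zero_of_ne (show h ≠ 0 by omega), chooseSumBelow_of_nonpos,
        show d + 1 ≤ 0 by omega, show d ≤ 0 by omega, show d - 1 ≤ 0 by omega]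
  | succ m ih =>
    rw [Nat.cast_succ] at hmd
    rcases hh.eq_or_lt with rfl | hh
    · obtain ⟨e, rfl⟩ : ∃ e : ℕ, d = e + 1 := ⟨(d - 1).toNat, by omega⟩
      obtain rfl : m = 2 * e := by omega
      rw [nonnegWalks_of_neg (by norm_num), card_empty, Nat.cast_zero,
        ← chooseSumBelow_central e]
      ring_nf
    · rw [card_nonnegWalks_succ (by omega), Nat.cast_add, ih (d := d) (by omega) (by omega),
        ih (d := d - 1) (by omega) (by omega)]
      simp only [chooseSumBelow_succ, add_sub_cancel_right, sub_add_cancel]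
      ring

/-- The closed form was found as the solution of the recursion
`sum_heightSum_nonnegWalks_succ` that is linear in `chooseSumBelow m (d + j)`, `|j| ≤ 1`, with
polynomial coefficients; its factor `h + 1` makes the boundary case `h = -1` trivial. -/
theorem two_mul_sum_heightSum_nonnegWalks {m : ℕ} {h d : ℤ} (hmd : (m : ℤ) = h + 2 * d)
    (hh : -1 ≤ h) :
    2 * ∑ f ∈ nonnegWalks m h, heightSum f =
      (h + 1) * (h * (chooseSumBelow m (d + 1) - chooseSumBelow m (d - 1)) +
        2 * (chooseSumBelow m d + chooseSumBelow m (d - 1))) := by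
  induction m generalizing h d with
  | zero =>
    rcases (show d = 0 ∨ d ≤ -1 by omega) with rfl | hd
    · obtain rfl : h = 0 := by omega
      simp [heightSum, dheight_zero, chooseSumBelow]
    · simp [nonnegWalks_zero_of_ne (show h ≠ 0 by omega), chooseSumBelow_of_nonpos,
        show d + 1 ≤ 0 by omega, show d ≤ 0 by omega, show d - 1 ≤ 0 by omega]
  | succ m ih =>
    rw [Nat.cast_succ] at hmd
    rcases hh.eq_or_lt with rfl | hh
    · simp [nonnegWalks_of_neg]
    have hdown := ih (h := h - 1) (d := d) (by omega) (by omega)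
    have hup := ih (h := h + 1) (d := d - 1) (by omega) (by omega)
    have cdown := card_nonnegWalks (m := m) (h := h - 1) (d := d) (by omega) (by omega)
    have cup := card_nonnegWalks (m := m) (h := h + 1) (d := d - 1) (by omega) (by omega)
    rw [sum_heightSum_nonnegWalks_succ (by omega)]
    simp only [chooseSumBelow_succ, add_sub_cancel_right, sub_add_cancel] at hup cup ⊢
    linear_combination hdown + hup + 2 * h * (cdown + cup)

lemma filter_isDyck_eq_nonnegWalks (m : ℕ) :
    univ.filter (fun f : Fin m → Bool => IsDyck f) = nonnegWalks m 0 := by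
  ext f
  simp only [mem_filter, mem_univ, true_and, IsDyck, mem_nonnegWalks, mem_range]
  constructor
  · rintro ⟨hend, hnonneg⟩
    refine ⟨fun k hk => ?_, hend⟩
    rcases hk.lt_or_eq with hk | rfl
    exacts [hnonneg k hk, hend.ge]
  · rintro ⟨hnonneg, hend⟩
    exact ⟨hend, fun k hk => hnonneg k hk.le⟩

lemma dyckPowerSum_one_eq (n : ℕ) :
    dyckPowerSum n 1 = ∑ f ∈ nonnegWalks (2 * n) 0, heightSum f := by
  rw [dyckPowerSum, filter_isDyck_eq_nonnegWalks, Int.cast_sum]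
  refine sum_congr rfl fun f hf => ?_
  rw [pow_one, heightSum_eq_darea_add, (mem_nonnegWalks.mp hf).2, add_zero]

lemma choose_eq_mul_cat (n : ℕ) : ((2 * n + 1).choose n : ℚ) = (2 * n + 1) * cat n := by
  rw [cat, Nat.cast_choose ℚ (by omega : n ≤ 2 * n + 1), show 2 * n + 1 - n = n + 1 by omega,
    Nat.factorial_succ (2 * n)]
  push_cast
  ring

theorem dyck_area_sum (n : ℕ) :
    dyckPowerSum n 1 = -(2*(n:ℚ)+1) * cat n + 4^n := by
  have hArea : ∑ f ∈ nonnegWalks (2 * n) 0, heightSum f = chooseSumBelow (2 * n + 1) n := by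
    have h := two_mul_sum_heightSum_nonnegWalks (m := 2 * n) (h := 0) (d := n)
      (by push_cast; ring) (by norm_num)
    rw [chooseSumBelow_succ]
    linarith
  rw [dyckPowerSum_one_eq, hArea, chooseSumBelow_halfway]
  push_cast
  rw [choose_eq_mul_cat]
  ring
end

section
/- The sum of the cubes of the areas under all Dyck paths from (0,0) to (2n,0) equals (-20n^4 - 60n^3 - 61n^2 - 26n - 4)·C(n) + ((15/4)n^3 + (75/4)n^2 + (33/2)n + 4)·4^n, where C(n) is the n-th Catalan number. -/
/-!
Cutting a nonempty Dyck path at its first return to the axis writes it as `U a D b` with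
`|a| + |b| = n`, and its area is `area a + area b + 2|a| + 1`. By the binomial theorem the power
sums `S r n = ∑ area ^ r` therefore satisfy a recurrence expressing `S r (n + 1)` through
convolutions over `i + j = n` of `S r' i` and `S r'' j` with `r', r'' ≤ r`. With `C = catalan`,
substituting closed forms `P(k) C k + Q(k) 4 ^ k` for the lower powers reduces everything to the
sums of `i ^ e C i C j` and `i ^ e C i 4 ^ j` over `i + j = n`. These are explicit: the former by
symmetry in `i, j` and `∑ binom(2i, i) binom(2j, j) = 4 ^ n`, the latter by a first-order
recurrence in `n` driven by `(n + 2) C (n + 1) = 2 (2n + 1) C n`. Strong induction on `n` then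
gives the closed forms for `r = 1, 2, 3` in turn.
-/

open Finset

open DyckStep

section BinomialExpansion

variable {ι κ R : Type*} [CommSemiring R]

theorem sum_add_pow (s : Finset ι) (u : ι → R) (c : R) (m : ℕ) :
    ∑ x ∈ s, (u x + c) ^ m
      = ∑ a ∈ range (m + 1), (m.choose a : R) * (∑ x ∈ s, u x ^ a) * c ^ (m - a) := by
  simp_rw [add_pow, mul_sum, sum_mul]
  rw [sum_comm]
  exact sum_congr rfl fun a _ ↦ sum_congr rfl fun x _ ↦ by ring

theorem sum_sum_add_add_pow (s : Finset ι) (t : Finset κ) (u : ι → R) (v : κ → R) (c : R)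
    (r : ℕ) :
    ∑ x ∈ s, ∑ y ∈ t, (u x + v y + c) ^ r =
      ∑ a ∈ range (r + 1), ∑ b ∈ range (r - a + 1), (r.choose a * (r - a).choose b : R) *
        (∑ x ∈ s, u x ^ a) * (∑ y ∈ t, v y ^ b) * c ^ (r - a - b) := by
  rw [sum_comm]
  simp_rw [add_assoc, sum_add_pow]
  rw [sum_comm]
  refine sum_congr rfl fun a _ ↦ ?_
  rw [← mul_sum, sum_add_pow, mul_sum]
  exact sum_congr rfl fun b _ ↦ by ring

end BinomialExpansion

section Antidiagonal

variable {R : Type*} [CommSemiring R]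

lemma sum_antidiagonal_comm {M : Type*} [AddCommMonoid M] (f : ℕ → ℕ → M) (n : ℕ) :
    ∑ p ∈ antidiagonal n, f p.2 p.1 = ∑ p ∈ antidiagonal n, f p.1 p.2 :=
  Finset.Nat.sum_antidiagonal_swap (f := fun p ↦ f p.1 p.2)

lemma sum_antidiagonal_mul_mul_swap (g f : ℕ → R) (n : ℕ) :
    ∑ p ∈ antidiagonal n, g p.1 * f p.1 * f p.2
      = ∑ p ∈ antidiagonal n, g p.2 * f p.1 * f p.2 := by
  rw [← sum_antidiagonal_comm fun i j ↦ g i * f i * f j]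
  exact sum_congr rfl fun p _ ↦ mul_right_comm _ _ _

lemma two_mul_sum_antidiagonal_fst_mul (f : ℕ → R) (n : ℕ) :
    2 * ∑ p ∈ antidiagonal n, (p.1 : R) * f p.1 * f p.2
      = n * ∑ p ∈ antidiagonal n, f p.1 * f p.2 := by
  rw [two_mul]
  nth_rw 2 [sum_antidiagonal_mul_mul_swap]
  rw [← sum_add_distrib, mul_sum]
  refine sum_congr rfl fun p hp ↦ ?_
  rw [← add_mul, ← add_mul, ← Nat.cast_add, mem_antidiagonal.1 hp, mul_assoc]

lemma sum_antidiagonal_cast_fst (n : ℕ) :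
    ∑ p ∈ antidiagonal n, (p.1 : ℚ) = n * (n + 1) / 2 := by
  have h := two_mul_sum_antidiagonal_fst_mul (fun _ ↦ (1 : ℚ)) n
  simp only [mul_one, sum_const, Nat.card_antidiagonal, nsmul_eq_mul] at h
  push_cast at h
  linear_combination h / 2

lemma sum_antidiagonal_mul_pow_of_recurrence {a g : ℕ → R} {x c : R} (h₀ : g 0 + c = a 0)
    (hsucc : ∀ n, g (n + 1) = a (n + 1) + x * g n) (n : ℕ) :
    ∑ p ∈ antidiagonal n, a p.1 * x ^ p.2 = g n + c * x ^ n := by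
  induction n with
  | zero => simp [h₀]
  | succ n ih =>
    simp_rw [Finset.Nat.sum_antidiagonal_succ', pow_succ', ← mul_left_comm x, ← mul_sum, ih,
      hsucc]
    ring

end Antidiagonal

-- With `w n` the sum and `b = centralBinom`: `(n + 1) w (n + 1) = 2 ∑ i b i b j` by symmetry,
-- and shifting `i` with `(i + 1) b (i + 1) = 2 (2i + 1) b i` turns this into `4 (n + 1) w n`.
theorem Nat.sum_antidiagonal_centralBinom_mul_centralBinom (n : ℕ) :
    ∑ p ∈ antidiagonal n, p.1.centralBinom * p.2.centralBinom = 4 ^ n := by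
  induction n with
  | zero => simp
  | succ n ih =>
    have hsucc := two_mul_sum_antidiagonal_fst_mul centralBinom (n + 1)
    have hn := two_mul_sum_antidiagonal_fst_mul centralBinom n
    have hstep : ∀ p ∈ antidiagonal n, (p.1 + 1) * (p.1 + 1).centralBinom * p.2.centralBinom
        = 4 * (p.1 * p.1.centralBinom * p.2.centralBinom)
          + 2 * (p.1.centralBinom * p.2.centralBinom) :=
      fun p _ ↦ by rw [succ_mul_centralBinom_succ]; ring
    rw [Finset.Nat.sum_antidiagonal_succ] at hsucc
    simp only [cast_id, zero_mul, zero_add, sum_congr rfl hstep, sum_add_distrib, ← mul_sum, ih]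
      at hsucc hn
    apply Nat.eq_of_mul_eq_mul_left n.succ_pos
    rw [← hsucc, pow_succ]
    linarith

section Catalan

lemma add_two_mul_catalan_succ (n : ℕ) :
    ((n : ℚ) + 2) * catalan (n + 1) = 2 * (2 * n + 1) * catalan n := by
  have h₁ : ((n : ℚ) + 1 + 1) * catalan (n + 1) = (n + 1).centralBinom := by
    exact_mod_cast succ_mul_catalan_eq_centralBinom (n + 1)
  have h₂ : ((n : ℚ) + 1) * catalan n = n.centralBinom := by
    exact_mod_cast succ_mul_catalan_eq_centralBinom n
  have h₃ : ((n : ℚ) + 1) * (n + 1).centralBinom = 2 * (2 * n + 1) * n.centralBinom := by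
    exact_mod_cast Nat.succ_mul_centralBinom_succ n
  apply mul_left_cancel₀ (n.cast_add_one_ne_zero (R := ℚ))
  linear_combination (n + 1 : ℚ) * h₁ + h₃ - 2 * (2 * n + 1) * h₂

lemma cat_eq_catalan (n : ℕ) : cat n = catalan n := by
  have h : ((n : ℚ) + 1) * catalan n = (2 * n).choose n := by
    exact_mod_cast (succ_mul_catalan_eq_centralBinom n).trans (Nat.centralBinom_eq_two_mul_choose n)
  rw [Nat.cast_choose ℚ (by omega : n ≤ 2 * n), show 2 * n - n = n by omega,
    eq_div_iff (by positivity)] at h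
  rw [cat, Nat.factorial_succ, eq_comm]
  field_simp
  push_cast
  linear_combination h

lemma sum_antidiagonal_catalan_mul_catalan (n : ℕ) :
    ∑ p ∈ antidiagonal n, (catalan p.1 : ℚ) * catalan p.2 = catalan (n + 1) := by
  exact_mod_cast (catalan_succ' n).symm

lemma sum_antidiagonal_fst_mul_catalan_mul_catalan (n : ℕ) :
    ∑ p ∈ antidiagonal n, (p.1 : ℚ) * catalan p.1 * catalan p.2
      = n / 2 * catalan (n + 1) := by
  have h := two_mul_sum_antidiagonal_fst_mul (fun k ↦ (catalan k : ℚ)) n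
  rw [sum_antidiagonal_catalan_mul_catalan] at h
  linear_combination h / 2

lemma sum_antidiagonal_fst_sq_mul_catalan_mul_catalan (n : ℕ) :
    ∑ p ∈ antidiagonal n, (p.1 : ℚ) ^ 2 * catalan p.1 * catalan p.2
      = (1 + n + n ^ 2 / 2) * catalan (n + 1) - 4 ^ n := by
  have h : ∑ p ∈ antidiagonal n, ((p.1 : ℚ) + 1) * catalan p.1 * ((p.2 + 1) * catalan p.2)
      = 4 ^ n := by
    simp only [← Nat.cast_succ, ← Nat.cast_mul, succ_mul_catalan_eq_centralBinom]
    exact_mod_cast Nat.sum_antidiagonal_centralBinom_mul_centralBinom n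
  have hterm : ∀ p ∈ antidiagonal n, ((p.1 : ℚ) + 1) * catalan p.1 * ((p.2 + 1) * catalan p.2)
      = (n + 1) * (catalan p.1 * catalan p.2) + n * (p.1 * catalan p.1 * catalan p.2)
        - p.1 ^ 2 * catalan p.1 * catalan p.2 := by
    intro p hp
    have : (p.2 : ℚ) = n - p.1 := by rw [← mem_antidiagonal.1 hp]; push_cast; ring
    rw [this]
    ring
  rw [sum_congr rfl hterm, sum_sub_distrib, sum_add_distrib, ← mul_sum, ← mul_sum,
    sum_antidiagonal_catalan_mul_catalan, sum_antidiagonal_fst_mul_catalan_mul_catalan] at h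
  linear_combination -h

lemma sum_antidiagonal_fst_pow_three_mul_catalan_mul_catalan (n : ℕ) :
    ∑ p ∈ antidiagonal n, (p.1 : ℚ) ^ 3 * catalan p.1 * catalan p.2
      = (3 / 2 * n + 3 / 2 * n ^ 2 + n ^ 3 / 2) * catalan (n + 1) - 3 / 2 * n * 4 ^ n := by
  have h := sum_antidiagonal_mul_mul_swap (fun k ↦ (k : ℚ) ^ 3) (fun k ↦ (catalan k : ℚ)) n
  have hterm : ∀ p ∈ antidiagonal n, (p.2 : ℚ) ^ 3 * catalan p.1 * catalan p.2
      = n ^ 3 * (catalan p.1 * catalan p.2) - 3 * n ^ 2 * (p.1 * catalan p.1 * catalan p.2)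
        + 3 * n * (p.1 ^ 2 * catalan p.1 * catalan p.2) - p.1 ^ 3 * catalan p.1 * catalan p.2 := by
    intro p hp
    have : (p.2 : ℚ) = n - p.1 := by rw [← mem_antidiagonal.1 hp]; push_cast; ring
    rw [this]
    ring
  rw [sum_congr rfl hterm, sum_sub_distrib, sum_add_distrib, sum_sub_distrib, ← mul_sum,
    ← mul_sum, ← mul_sum, sum_antidiagonal_catalan_mul_catalan,
    sum_antidiagonal_fst_mul_catalan_mul_catalan,
    sum_antidiagonal_fst_sq_mul_catalan_mul_catalan] at h
  linear_combination h / 2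

lemma sum_antidiagonal_catalan_mul_four_pow (n : ℕ) :
    ∑ p ∈ antidiagonal n, (catalan p.1 : ℚ) * 4 ^ p.2
      = -(n + 2) / 2 * catalan (n + 1) + 2 * 4 ^ n := by
  refine sum_antidiagonal_mul_pow_of_recurrence (a := fun k ↦ (catalan k : ℚ))
    (g := fun n ↦ -((n : ℚ) + 2) / 2 * catalan (n + 1)) (by norm_num) (fun n ↦ ?_) n
  have := add_two_mul_catalan_succ (n + 1)
  push_cast at this ⊢
  linear_combination (-1 / 2 : ℚ) * this

lemma sum_antidiagonal_fst_mul_catalan_mul_four_pow (n : ℕ) :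
    ∑ p ∈ antidiagonal n, (p.1 : ℚ) * catalan p.1 * 4 ^ p.2
      = ((n : ℚ) + 2) ^ 2 / 2 * catalan (n + 1) - 2 * 4 ^ n := by
  refine (sum_antidiagonal_mul_pow_of_recurrence (a := fun k ↦ (k : ℚ) * catalan k)
    (g := fun n ↦ ((n : ℚ) + 2) ^ 2 / 2 * catalan (n + 1)) (c := -2) (by norm_num)
    (fun n ↦ ?_) n).trans (by ring)
  have := add_two_mul_catalan_succ (n + 1)
  push_cast at this ⊢
  linear_combination ((n + 3) / 2 : ℚ) * this

lemma sum_antidiagonal_fst_sq_mul_catalan_mul_four_pow (n : ℕ) :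
    ∑ p ∈ antidiagonal n, (p.1 : ℚ) ^ 2 * catalan p.1 * 4 ^ p.2
      = ((n : ℚ) + 2) * (n ^ 2 - 2 * n - 6) / 6 * catalan (n + 1) + 2 * 4 ^ n := by
  refine sum_antidiagonal_mul_pow_of_recurrence (a := fun k ↦ (k : ℚ) ^ 2 * catalan k)
    (g := fun n ↦ ((n : ℚ) + 2) * (n ^ 2 - 2 * n - 6) / 6 * catalan (n + 1)) (by norm_num)
    (fun n ↦ ?_) n
  have := add_two_mul_catalan_succ (n + 1)
  push_cast at this ⊢
  linear_combination (((n : ℚ) ^ 2 - 7) / 6) * this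

lemma sum_antidiagonal_fst_pow_three_mul_catalan_mul_four_pow (n : ℕ) :
    ∑ p ∈ antidiagonal n, (p.1 : ℚ) ^ 3 * catalan p.1 * 4 ^ p.2
      = ((n : ℚ) + 2) * (n ^ 3 + 4 * n + 10) / 10 * catalan (n + 1) - 2 * 4 ^ n := by
  refine (sum_antidiagonal_mul_pow_of_recurrence (a := fun k ↦ (k : ℚ) ^ 3 * catalan k)
    (g := fun n ↦ ((n : ℚ) + 2) * (n ^ 3 + 4 * n + 10) / 10 * catalan (n + 1)) (c := -2)
    (by norm_num) (fun n ↦ ?_) n).trans (by ring)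
  have := add_two_mul_catalan_succ (n + 1)
  push_cast at this ⊢
  linear_combination ((((n : ℚ) + 1) ^ 3 + 4 * (n + 1) + 10) / 10) * this

end Catalan

section DyckPaths

def dyckHeight (l : List DyckStep) : ℤ := l.count U - l.count D

def dyckArea (l : List DyckStep) : ℤ := ∑ k ∈ range l.length, dyckHeight (l.take k)

lemma dyckHeight_append (l₁ l₂ : List DyckStep) :
    dyckHeight (l₁ ++ l₂) = dyckHeight l₁ + dyckHeight l₂ := by
  simp only [dyckHeight, List.count_append]
  push_cast
  ring

lemma dyckArea_append (l₁ l₂ : List DyckStep) :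
    dyckArea (l₁ ++ l₂) = dyckArea l₁ + l₂.length * dyckHeight l₁ + dyckArea l₂ := by
  rw [dyckArea, List.length_append, sum_range_add, add_assoc]
  congr 1
  · exact sum_congr rfl fun k hk ↦ by rw [List.take_append_of_le_length (mem_range.1 hk).le]
  · simp_rw [List.take_append, List.take_of_length_le (Nat.le_add_right _ _),
      Nat.add_sub_cancel_left, dyckHeight_append, sum_add_distrib, sum_const, card_range,
      nsmul_eq_mul, dyckArea]

lemma dyckArea_singleton (s : DyckStep) : dyckArea [s] = 0 := by
  simp [dyckArea, dyckHeight]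

namespace DyckWord

def area (p : DyckWord) : ℤ := dyckArea p.toList

lemma area_zero : area 0 = 0 := rfl

lemma dyckHeight_toList (p : DyckWord) : dyckHeight p.toList = 0 := by
  simp [dyckHeight, p.count_U_eq_count_D]

lemma area_add (p q : DyckWord) : (p + q).area = p.area + q.area := by
  show dyckArea (p.toList ++ q.toList) = _
  rw [dyckArea_append, dyckHeight_toList, mul_zero, add_zero, area, area]

lemma area_nest (p : DyckWord) : p.nest.area = p.area + 2 * p.semilength + 1 := by
  show dyckArea ([U] ++ p.toList ++ [D]) = _
  have hlen : (p.toList.length : ℤ) = 2 * p.semilength :=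
    mod_cast p.two_mul_semilength_eq_length.symm
  have hU : dyckHeight [U] = 1 := rfl
  rw [dyckArea_append, dyckArea_append, dyckHeight_append, dyckHeight_toList, dyckArea_singleton,
    dyckArea_singleton, hlen, hU, List.length_singleton, area]
  push_cast
  ring

end DyckWord

def toSteps {m : ℕ} (f : Fin m → Bool) : List DyckStep :=
  List.ofFn fun i ↦ if f i then U else D

@[simp]
lemma length_toSteps {m : ℕ} (f : Fin m → Bool) : (toSteps f).length = m := by simp [toSteps]

lemma dheight_succ {m : ℕ} (f : Fin m → Bool) (k : ℕ) :
    dheight f (k + 1) = dheight f k + if h : k < m then dstep (f ⟨k, h⟩) else 0 := by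
  split_ifs with h
  · have : univ.filter (fun i : Fin m ↦ (i : ℕ) < k + 1)
        = insert ⟨k, h⟩ (univ.filter fun i : Fin m ↦ (i : ℕ) < k) := by
      ext i
      simp only [Order.lt_add_one_iff, mem_filter, mem_univ, true_and, mem_insert, Fin.ext_iff]
      omega
    rw [dheight, this, sum_insert (by simp), dheight, add_comm]
  · rw [add_zero, dheight, dheight]
    congr 1
    ext i
    simp only [Order.lt_add_one_iff, mem_filter, mem_univ, true_and]
    omega

lemma dheight_eq_dyckHeight_take {m : ℕ} (f : Fin m → Bool) (k : ℕ) :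
    dheight f k = dyckHeight ((toSteps f).take k) := by
  induction k with
  | zero => simp [dheight, dyckHeight]
  | succ k ih =>
    rw [dheight_succ, ih, List.take_add_one, dyckHeight_append]
    split_ifs with h
    · cases hf : f ⟨k, h⟩ <;> simp [toSteps, h, hf, dstep, dyckHeight]
    · simp [toSteps, h, dyckHeight]

lemma darea_eq_dyckArea {m : ℕ} (f : Fin m → Bool) : darea f = dyckArea (toSteps f) := by
  simp only [darea, dyckArea, length_toSteps, dheight_eq_dyckHeight_take]

lemma isDyck_iff {m : ℕ} (f : Fin m → Bool) :
    IsDyck f ↔ (toSteps f).count U = (toSteps f).count D ∧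
      ∀ i, ((toSteps f).take i).count D ≤ ((toSteps f).take i).count U := by
  have htake {i : ℕ} (hi : m ≤ i) : (toSteps f).take i = toSteps f :=
    List.take_of_length_le (by simpa using hi)
  simp only [IsDyck, dheight_eq_dyckHeight_take, htake le_rfl, dyckHeight, mem_range]
  refine ⟨fun ⟨h, h'⟩ ↦ ⟨by omega, fun i ↦ ?_⟩,
    fun ⟨h, h'⟩ ↦ ⟨by omega, fun k _ ↦ by linarith [h' k]⟩⟩
  rcases lt_or_ge i m with hi | hi
  · linarith [h' i hi]
  · rw [htake hi]
    omega

def toDyckWord {m : ℕ} (f : Fin m → Bool) (hf : IsDyck f) : DyckWord :=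
  ⟨toSteps f, ((isDyck_iff f).1 hf).1, ((isDyck_iff f).1 hf).2⟩

def DyckWord.toBoolFun (p : DyckWord) (m : ℕ) : Fin m → Bool := fun i ↦ p.toList.getD i D = U

lemma toSteps_toBoolFun {p : DyckWord} {m : ℕ} (hp : p.toList.length = m) :
    toSteps (p.toBoolFun m) = p.toList := by
  subst hp
  refine List.ext_getElem (by simp) fun i h _ ↦ ?_
  rcases (p.toList[i]).dichotomy with h' | h' <;> simp [toSteps, DyckWord.toBoolFun, h']

def dyckWords (n : ℕ) : Finset DyckWord :=
  univ.map (Function.Embedding.subtype fun p : DyckWord ↦ p.semilength = n)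

@[simp]
lemma mem_dyckWords {n : ℕ} {p : DyckWord} : p ∈ dyckWords n ↔ p.semilength = n := by
  simp [dyckWords]

lemma sum_isDyck_eq_sum_dyckWords {M : Type*} [AddCommMonoid M] (n : ℕ) (φ : ℤ → M) :
    ∑ f ∈ univ.filter (fun f : Fin (2 * n) → Bool ↦ IsDyck f), φ (darea f)
      = ∑ p ∈ dyckWords n, φ p.area := by
  refine sum_bij' (fun f hf ↦ toDyckWord f (mem_filter.1 hf).2) (fun p _ ↦ p.toBoolFun (2 * n))
    (fun f hf ↦ ?_) (fun p hp ↦ ?_) (fun f _ ↦ ?_) (fun p hp ↦ ?_) (fun f _ ↦ ?_)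
  · have := (toDyckWord f (mem_filter.1 hf).2).two_mul_semilength_eq_length
    rw [show (toDyckWord f _).toList = toSteps f from rfl, length_toSteps] at this
    rw [mem_dyckWords]
    omega
  · have hlen : p.toList.length = 2 * n := by
      rw [← p.two_mul_semilength_eq_length, mem_dyckWords.1 hp]
    simpa [isDyck_iff, toSteps_toBoolFun hlen] using
      ⟨p.count_U_eq_count_D, p.count_D_le_count_U⟩
  · funext i
    cases hf : f i <;> simp [toDyckWord, DyckWord.toBoolFun, toSteps, hf]
  · have hlen : p.toList.length = 2 * n := by
      rw [← p.two_mul_semilength_eq_length, mem_dyckWords.1 hp]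
    exact DyckWord.ext (toSteps_toBoolFun hlen)
  · rw [darea_eq_dyckArea]
    rfl

lemma sum_dyckWords_succ {M : Type*} [AddCommMonoid M] (n : ℕ) (φ : DyckWord → M) :
    ∑ p ∈ dyckWords (n + 1), φ p
      = ∑ q ∈ antidiagonal n, ∑ a ∈ dyckWords q.1, ∑ b ∈ dyckWords q.2,
          φ (a.nest + b) := by
  simp_rw [← sum_product', sum_sigma']
  symm
  refine sum_nbij' (fun x ↦ x.2.1.nest + x.2.2)
    (fun p ↦ ⟨(p.insidePart.semilength, p.outsidePart.semilength),
      (p.insidePart, p.outsidePart)⟩)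
    (fun x hx ↦ ?_) (fun p hp ↦ ?_) (fun x hx ↦ ?_) (fun p hp ↦ ?_) (fun _ _ ↦ rfl)
  · simp only [mem_sigma, HasAntidiagonal.mem_antidiagonal, mem_product, mem_dyckWords] at hx ⊢
    simp only [DyckWord.semilength_add, DyckWord.semilength_nest]
    omega
  · simp only [mem_sigma, HasAntidiagonal.mem_antidiagonal, mem_product, mem_dyckWords, and_true]
      at hp ⊢
    have := DyckWord.semilength_insidePart_add_semilength_outsidePart_add_one
      (p := p) (by rintro rfl; simp at hp)
    omega
  · obtain ⟨⟨i, j⟩, a, b⟩ := x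
    simp only [mem_sigma, HasAntidiagonal.mem_antidiagonal, mem_product, mem_dyckWords] at hx
    obtain ⟨-, rfl, rfl⟩ := hx
    simp [DyckWord.insidePart_add, DyckWord.outsidePart_add]
  · rw [mem_dyckWords] at hp
    exact DyckWord.nest_insidePart_add_outsidePart (by rintro rfl; simp at hp)

end DyckPaths

section PowerSums

lemma dyckPowerSum_eq_sum_dyckWords (n r : ℕ) :
    dyckPowerSum n r = ∑ p ∈ dyckWords n, (p.area : ℚ) ^ r :=
  sum_isDyck_eq_sum_dyckWords n fun z ↦ (z : ℚ) ^ r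

lemma dyckPowerSum_zero_left (r : ℕ) : dyckPowerSum 0 r = 0 ^ r := by
  have : dyckWords 0 = {0} := by
    ext p
    rw [mem_dyckWords, mem_singleton, ← DyckWord.toList_eq_nil, ← List.length_eq_zero_iff,
      ← p.two_mul_semilength_eq_length]
    omega
  simp [dyckPowerSum_eq_sum_dyckWords, this, DyckWord.area_zero]

lemma dyckPowerSum_zero_right (n : ℕ) : dyckPowerSum n 0 = catalan n := by
  simp [dyckPowerSum_eq_sum_dyckWords, dyckWords, DyckWord.card_dyckWord_semilength_eq_catalan]

lemma dyckPowerSum_succ (n r : ℕ) :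
    dyckPowerSum (n + 1) r =
      ∑ q ∈ antidiagonal n, ∑ a ∈ range (r + 1), ∑ b ∈ range (r - a + 1),
      (r.choose a * (r - a).choose b : ℚ) * dyckPowerSum q.1 a * dyckPowerSum q.2 b *
        (2 * q.1 + 1) ^ (r - a - b) := by
  rw [dyckPowerSum_eq_sum_dyckWords, sum_dyckWords_succ]
  refine sum_congr rfl fun q _ ↦ ?_
  simp only [dyckPowerSum_eq_sum_dyckWords]
  rw [← sum_sum_add_add_pow]
  refine sum_congr rfl fun a ha ↦ sum_congr rfl fun b _ ↦ ?_
  rw [DyckWord.area_add, DyckWord.area_nest, mem_dyckWords.1 ha]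
  push_cast
  ring

/- Each summand of the recurrence `dyckPowerSum_succ` is rewritten, via the closed forms of the
lower powers and `i + j = n`, as a combination of `i ^ e C i C j`, `i ^ e C i 4 ^ j` and
`j ^ e C j 4 ^ i` with coefficients polynomial in `n`; weighting the last kind by `j ^ e` makes its
sum the mirror image of the second. -/

theorem dyckPowerSum_one_right (n : ℕ) :
    dyckPowerSum n 1 = 4 ^ n - (2 * n + 1) * catalan n := by
  induction n using Nat.strong_induction_on with | _ n ih => ?_
  rcases n with _ | n
  · simp [dyckPowerSum_zero_left]
  calc dyckPowerSum (n + 1) 1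
      = ∑ p ∈ antidiagonal n, (-(1 + 2 * n) * ((catalan p.1 : ℚ) * catalan p.2)
          + 2 * ((p.1 : ℚ) * catalan p.1 * catalan p.2)
          + (catalan p.1 : ℚ) * 4 ^ p.2 + (catalan p.2 : ℚ) * 4 ^ p.1) := by
        rw [dyckPowerSum_succ]
        refine sum_congr rfl fun ⟨i, j⟩ hp ↦ ?_
        obtain rfl := mem_antidiagonal.1 hp
        simp [sum_range_succ, ih i (by omega), ih j (by omega), dyckPowerSum_zero_right]
        ring
    _ = _ := by
        simp only [sum_add_distrib, ← mul_sum,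
          sum_antidiagonal_comm (fun i j ↦ (catalan i : ℚ) * 4 ^ j),
          sum_antidiagonal_catalan_mul_catalan, sum_antidiagonal_fst_mul_catalan_mul_catalan,
          sum_antidiagonal_catalan_mul_four_pow]
        push_cast
        ring

theorem dyckPowerSum_two_right (n : ℕ) :
    dyckPowerSum n 2 =
      (2 + 26 / 3 * n + 11 * n ^ 2 + 10 / 3 * n ^ 3) * catalan n - (2 + 4 * n) * 4 ^ n := by
  induction n using Nat.strong_induction_on with | _ n ih => ?_
  rcases n with _ | n
  · simp [dyckPowerSum_zero_left]
  calc dyckPowerSum (n + 1) 2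
      = ∑ p ∈ antidiagonal n,
          ((3 + 26 / 3 * n + 11 * n ^ 2 + 10 / 3 * n ^ 3) * ((catalan p.1 : ℚ) * catalan p.2)
          + (-4 - 22 * n - 10 * n ^ 2) * ((p.1 : ℚ) * catalan p.1 * catalan p.2)
          + (18 + 10 * n) * ((p.1 : ℚ) ^ 2 * catalan p.1 * catalan p.2)
          + (-2 - 4 * n) * ((catalan p.1 : ℚ) * 4 ^ p.2)
          + 4 * ((p.1 : ℚ) * catalan p.1 * 4 ^ p.2)
          - 2 * ((catalan p.2 : ℚ) * 4 ^ p.1)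
          - 4 * ((p.2 : ℚ) * catalan p.2 * 4 ^ p.1)
          + 2 * 4 ^ n) := by
        rw [dyckPowerSum_succ]
        refine sum_congr rfl fun ⟨i, j⟩ hp ↦ ?_
        obtain rfl := mem_antidiagonal.1 hp
        simp [sum_range_succ, ih i (by omega), ih j (by omega), dyckPowerSum_zero_right,
          dyckPowerSum_one_right]
        ring
    _ = _ := by
        simp only [sum_add_distrib, sum_sub_distrib, ← mul_sum,
          sum_antidiagonal_comm (fun i j ↦ (catalan i : ℚ) * 4 ^ j),
          sum_antidiagonal_comm (fun i j ↦ (i : ℚ) * catalan i * 4 ^ j),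
          sum_antidiagonal_catalan_mul_catalan, sum_antidiagonal_fst_mul_catalan_mul_catalan,
          sum_antidiagonal_fst_sq_mul_catalan_mul_catalan,
          sum_antidiagonal_catalan_mul_four_pow, sum_antidiagonal_fst_mul_catalan_mul_four_pow,
          sum_const, Nat.card_antidiagonal, nsmul_eq_mul]
        push_cast
        ring

theorem dyckPowerSum_three_right (n : ℕ) :
    dyckPowerSum n 3 =
      (-20 * n ^ 4 - 60 * n ^ 3 - 61 * n ^ 2 - 26 * n - 4) * catalan n
        + (15 / 4 * n ^ 3 + 75 / 4 * n ^ 2 + 33 / 2 * n + 4) * 4 ^ n := by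
  induction n using Nat.strong_induction_on with | _ n ih => ?_
  rcases n with _ | n
  · simp [dyckPowerSum_zero_left]
  calc dyckPowerSum (n + 1) 3
      = ∑ p ∈ antidiagonal n,
          ((-7 - 32 * n - 61 * n ^ 2 - 60 * n ^ 3 - 20 * n ^ 4)
            * ((catalan p.1 : ℚ) * catalan p.2)
          + (18 + 94 * n + 180 * n ^ 2 + 80 * n ^ 3) * ((p.1 : ℚ) * catalan p.1 * catalan p.2)
          + (-54 - 222 * n - 120 * n ^ 2) * ((p.1 : ℚ) ^ 2 * catalan p.1 * catalan p.2)
          + (92 + 60 * n) * ((p.1 : ℚ) ^ 3 * catalan p.1 * catalan p.2)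
          + (7 + 33 / 2 * n + 75 / 4 * n ^ 2 + 15 / 4 * n ^ 3) * ((catalan p.1 : ℚ) * 4 ^ p.2)
          + (-5 / 2 - 75 / 2 * n - 45 / 4 * n ^ 2) * ((p.1 : ℚ) * catalan p.1 * 4 ^ p.2)
          + (159 / 4 + 45 / 4 * n) * ((p.1 : ℚ) ^ 2 * catalan p.1 * 4 ^ p.2)
          + 25 / 4 * ((p.1 : ℚ) ^ 3 * catalan p.1 * 4 ^ p.2)
          + (7 + 9 / 2 * n + 27 / 4 * n ^ 2 + 15 / 4 * n ^ 3) * ((catalan p.2 : ℚ) * 4 ^ p.1)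
          + (43 / 2 - 27 / 2 * n - 45 / 4 * n ^ 2) * ((p.2 : ℚ) * catalan p.2 * 4 ^ p.1)
          + (159 / 4 + 45 / 4 * n) * ((p.2 : ℚ) ^ 2 * catalan p.2 * 4 ^ p.1)
          + 25 / 4 * ((p.2 : ℚ) ^ 3 * catalan p.2 * 4 ^ p.1)
          + (-6 - 12 * n) * 4 ^ n
          + 12 * 4 ^ n * (p.1 : ℚ)) := by
        rw [dyckPowerSum_succ]
        refine sum_congr rfl fun ⟨i, j⟩ hp ↦ ?_
        obtain rfl := mem_antidiagonal.1 hp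
        simp [sum_range_succ, ih i (by omega), ih j (by omega), dyckPowerSum_zero_right,
          dyckPowerSum_one_right, dyckPowerSum_two_right]
        ring
    _ = _ := by
        simp only [sum_add_distrib, ← mul_sum,
          sum_antidiagonal_comm (fun i j ↦ (catalan i : ℚ) * 4 ^ j),
          sum_antidiagonal_comm (fun i j ↦ (i : ℚ) * catalan i * 4 ^ j),
          sum_antidiagonal_comm (fun i j ↦ (i : ℚ) ^ 2 * catalan i * 4 ^ j),
          sum_antidiagonal_comm (fun i j ↦ (i : ℚ) ^ 3 * catalan i * 4 ^ j),
          sum_antidiagonal_catalan_mul_catalan, sum_antidiagonal_fst_mul_catalan_mul_catalan,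
          sum_antidiagonal_fst_sq_mul_catalan_mul_catalan,
          sum_antidiagonal_fst_pow_three_mul_catalan_mul_catalan,
          sum_antidiagonal_catalan_mul_four_pow, sum_antidiagonal_fst_mul_catalan_mul_four_pow,
          sum_antidiagonal_fst_sq_mul_catalan_mul_four_pow,
          sum_antidiagonal_fst_pow_three_mul_catalan_mul_four_pow, sum_antidiagonal_cast_fst,
          sum_const, Nat.card_antidiagonal, nsmul_eq_mul]
        push_cast
        ring

end PowerSums

theorem dyck_area_cube_sum (n : ℕ) :
    dyckPowerSum n 3 =
      (-20*(n:ℚ)^4 - 60*(n:ℚ)^3 - 61*(n:ℚ)^2 - 26*(n:ℚ) - 4) * cat n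
        + ((15/4)*(n:ℚ)^3 + (75/4)*(n:ℚ)^2 + (33/2)*(n:ℚ) + 4) * 4^n := by
  rw [dyckPowerSum_three_right, cat_eq_catalan]
end
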